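/- The Burning Algorithm terminates if and only if the configuration is allowed: for a stable configuration η on a finite connected multigraph G with sink s, there exists i ≥ 1 with U(i) = ∅ if and only if no nonempty subset F ⊆ V gives a forbidden subconfiguration η_F. -/

import Mathlib

/-!
A forbidden set `F` never burns: if `F ⊆ U(n)` then `deg_F ≤ deg_{U(n)}` on `F`, so `F ⊆ U(n+1)`.
Conversely, if no nonempty set is forbidden, then in particular a nonempty `U(n)` is not, so
some vertex of it burns in round `n + 1`; hence `U(|V|) = ∅`.
-/

/-- `deg_F x = ∑_{y ∈ F} a y x`, the degree of `x` within the vertex set `F`. -/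
def degIn {V : Type*} (a : V → V → ℕ) (F : Finset V) (x : V) : ℕ := ∑ y ∈ F, a y x

/-- Degree of `x` in the multigraph (edges to sink plus edges within `V`). -/
def sandDeg {V : Type*} [Fintype V] (a : V → V → ℕ) (aS : V → ℕ) (x : V) : ℕ :=
  aS x + ∑ y, a x y

/-- Unburnt sets of the Burning Algorithm. -/
def Uset {V : Type*} [Fintype V] [DecidableEq V] (a : V → V → ℕ) (η : V → ℕ) :
    ℕ → Finset V
  | 0 => Finset.univ
  | n + 1 => (Uset a η n).filter fun x => η x < degIn a (Uset a η n) x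

open Finset

def IsForbidden {V : Type*} (a : V → V → ℕ) (η : V → ℕ) (F : Finset V) : Prop :=
  ∀ z ∈ F, η z < degIn a F z

lemma degIn_mono {V : Type*} (a : V → V → ℕ) {F G : Finset V} (hFG : F ⊆ G) (x : V) :
    degIn a F x ≤ degIn a G x :=
  sum_le_sum_of_subset hFG

section Burning

variable {V : Type*} [Fintype V] [DecidableEq V] (a : V → V → ℕ) (η : V → ℕ)

lemma mem_Uset_succ {n : ℕ} {x : V} :
    x ∈ Uset a η (n + 1) ↔ x ∈ Uset a η n ∧ η x < degIn a (Uset a η n) x :=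
  mem_filter

lemma IsForbidden.subset_Uset {F : Finset V} (hF : IsForbidden a η F) (n : ℕ) :
    F ⊆ Uset a η n := by
  induction n with
  | zero => exact subset_univ F
  | succ n ih =>
    intro z hz
    exact (mem_Uset_succ a η).2 ⟨ih hz, (hF z hz).trans_le (degIn_mono a ih z)⟩

lemma Uset_succ_ssubset (hallowed : ∀ F : Finset V, F.Nonempty → ¬ IsForbidden a η F) {n : ℕ}
    (hne : (Uset a η n).Nonempty) : Uset a η (n + 1) ⊂ Uset a η n := by
  refine ⟨filter_subset _ _, fun hsub => hallowed _ hne fun z hz => ?_⟩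
  exact ((mem_Uset_succ a η).1 (hsub hz)).2

lemma card_Uset_le (hallowed : ∀ F : Finset V, F.Nonempty → ¬ IsForbidden a η F) (n : ℕ) :
    #(Uset a η n) ≤ Fintype.card V - n := by
  induction n with
  | zero => exact card_le_univ _
  | succ n ih =>
    rcases (Uset a η n).eq_empty_or_nonempty with hempty | hne
    · simp [Uset, hempty]
    · have := card_lt_card (Uset_succ_ssubset a η hallowed hne)
      omega

end Burning

theorem stmt_4_general {V : Type*} [Fintype V] [DecidableEq V]
    (a : V → V → ℕ)
    (η : V → ℕ) :
    (∃ i : ℕ, 1 ≤ i ∧ Uset a η i = ∅) ↔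
      (∀ F : Finset V, F.Nonempty → ¬ (∀ z ∈ F, η z < degIn a F z)) := by
  constructor
  · rintro ⟨i, -, hi⟩ F ⟨z, hz⟩ hforb
    simpa [hi] using IsForbidden.subset_Uset a η hforb i hz
  · intro hallowed
    refine ⟨Fintype.card V + 1, by omega, card_eq_zero.mp ?_⟩
    have := card_Uset_le a η hallowed (Fintype.card V + 1)
    omega

/-- the Burning Algorithm terminates if and only if the stable
configuration `η` is allowed: there exists `i ≥ 1` with `U(i) = ∅` iff no nonempty
`F ⊆ V` gives a forbidden subconfiguration `η_F`. -/
theorem stmt_4 {V : Type*} [Fintype V] [DecidableEq V]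
    (a : V → V → ℕ) (aS : V → ℕ)
    (hsymm : ∀ x y : V, a x y = a y x)
    (hconn : ∀ x : V, ∃ y : V,
      Relation.ReflTransGen (fun u v => 0 < a u v) x y ∧ 0 < aS y)
    (η : V → ℕ) (hstable : ∀ x : V, η x < sandDeg a aS x) :
    (∃ i : ℕ, 1 ≤ i ∧ Uset a η i = ∅) ↔
      (∀ F : Finset V, F.Nonempty → ¬ (∀ z ∈ F, η z < degIn a F z)) :=
  stmt_4_general a η
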